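/- Let D_{2η}^{n−1} = { x ∈ ℝ^{n−1} : ‖x‖ ≤ 2η } for η > 0, and on (t,x) = (t,x₁,…,x_{n−1}) ∈ [−2η,2η] × D_{2η}^{n−1} consider a Riemannian metric of the form dt² + Σ_{i,j=1}^{n−1} g_{ij}(t,x) dx_i dx_j, so that γ(t) = (t,0,…,0), t ∈ [−2η,2η], is a geodesic parametrized by arc length which is orthogonal at p = γ(0) = (0,…,0) to the hypersurface Σ = {0} × D_{2η}^{n−1}. Then in any neighborhood of g (in the C^r topology, r ≥ 2) there is a metric ḡ for which γ is still a geodesic parametrized by arc length but which is not orthogonal to Σ at p with respect to ḡ. -/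

import Mathlib

open Set Filter Metric
open scoped RealInnerProductSpace

noncomputable section

/-- Continuous bilinear forms on `E`, as continuous multilinear maps in two variables. -/
abbrev Bil (E : Type) [NormedAddCommGroup E] [NormedSpace ℝ E] : Type :=
  ContinuousMultilinearMap ℝ (fun _ : Fin 2 => E) ℝ

/-- A Riemannian metric of class `C^k` on (a region of) the vector space `E`, written in
the global linear coordinates of `E`: a `C^k` family of symmetric positive definite
continuous bilinear forms. -/
structure RMetricE (k : ℕ) (E : Type) [NormedAddCommGroup E] [NormedSpace ℝ E] : Type where
  val : E → Bil E
  symm : ∀ (x : E) (v w : E), val x ![v, w] = val x ![w, v]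
  posdef : ∀ (x : E) (v : E), v ≠ 0 → 0 < val x ![v, v]
  smooth : ContDiff ℝ k val

variable {k : ℕ} {E : Type} [NormedAddCommGroup E] [NormedSpace ℝ E]

/-- `γ` is a geodesic of `g` on the parameter set `s`, expressed through the geodesic
differential equation in the linear coordinates of `E` (the Euler-Lagrange equation of the
energy functional): for every fixed `w ∈ E`,
`d/dt [g_{γ(t)}(γ'(t), w)] = ½ (∂_w g)_{γ(t)}(γ'(t), γ'(t))`. -/
def IsGeodesicEOn (g : RMetricE k E) (γ : ℝ → E) (s : Set ℝ) : Prop :=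
  ContDiffOn ℝ 2 γ s ∧ ∀ t ∈ s, ∀ w : E,
    derivWithin (fun u => g.val (γ u) ![derivWithin γ s u, w]) s t
      = (1/2) * (fderiv ℝ g.val (γ t) w) ![derivWithin γ s t, derivWithin γ s t]

/-- The energy of a curve `γ : [0,1] → E` with respect to `g`. -/
def energyE (g : RMetricE k E) (γ : ℝ → E) : ℝ :=
  ∫ t in (0:ℝ)..1, g.val (γ t) ![derivWithin γ (Icc 0 1) t, derivWithin γ (Icc 0 1) t]

/-- The length of a curve `γ : [a,b] → E` with respect to `g`. -/
def clenE (g : RMetricE k E) (γ : ℝ → E) (a b : ℝ) : ℝ :=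
  ∫ t in a..b, Real.sqrt (g.val (γ t) ![derivWithin γ (Icc a b) t, derivWithin γ (Icc a b) t])

/-- A smooth one-parameter variation of curves inside the region `D`, with endpoints
constrained to `B₀`, `B₁`. -/
def IsVariationE (D B₀ B₁ : Set E) (α : ℝ → ℝ → E) : Prop :=
  ContDiffOn ℝ (⊤ : ℕ∞) (fun z : ℝ × ℝ => α z.1 z.2) (univ ×ˢ Icc 0 1) ∧
  (∀ s, ∀ t ∈ Icc (0:ℝ) 1, α s t ∈ D) ∧ ∀ s, α s 0 ∈ B₀ ∧ α s 1 ∈ B₁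

/-- A smooth two-parameter variation of curves inside `D` with endpoints in `B₀`, `B₁`. -/
def IsVariation2E (D B₀ B₁ : Set E) (β : ℝ → ℝ → ℝ → E) : Prop :=
  ContDiffOn ℝ (⊤ : ℕ∞) (fun z : ℝ × ℝ × ℝ => β z.1 z.2.1 z.2.2) (univ ×ˢ univ ×ˢ Icc 0 1) ∧
  (∀ s r, ∀ t ∈ Icc (0:ℝ) 1, β s r t ∈ D) ∧ ∀ s r, β s r 0 ∈ B₀ ∧ β s r 1 ∈ B₁

/-- The variation vector field at `s = 0` of a one-parameter variation. -/
def variationFieldE (α : ℝ → ℝ → E) (t : ℝ) : E :=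
  deriv (fun s => α s t) 0

/-- Non-degeneracy of a critical point `γ` of the energy functional on curves in `D` with
endpoint constraints `B₀`, `B₁`: the kernel of the index form (= second variation of the
energy) is trivial, expressed via smooth variations.  By the classical theory this kernel
consists exactly of the Jacobi fields `Y` along `γ` tangent to the constraint at the
endpoints and with `∇Y(l) + S_{γ(l)}(Y(l)) ⊥ T B_l`, `l = 0,1`, where `S` is the shape
operator. -/
def IsNonDegenerateE (g : RMetricE k E) (D B₀ B₁ : Set E) (γ : ℝ → E) : Prop :=
  ∀ α : ℝ → ℝ → E, IsVariationE D B₀ B₁ α → (∀ t ∈ Icc (0:ℝ) 1, α 0 t = γ t) →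
    (∃ t ∈ Icc (0:ℝ) 1, variationFieldE α t ≠ 0) →
    ∃ β : ℝ → ℝ → ℝ → E, IsVariation2E D B₀ B₁ β ∧ (∀ t ∈ Icc (0:ℝ) 1, β 0 0 t = γ t) ∧
      (∀ t ∈ Icc (0:ℝ) 1, variationFieldE (fun s u => β s 0 u) t = variationFieldE α t) ∧
      deriv (fun s => deriv (fun r => energyE g (β s r)) 0) 0 ≠ 0

set_option synthInstance.maxHeartbeats 1000000 in
/-- The strong `C^k` topology on metrics on the region `D ⊆ E`: the initial topology
induced by the iterated derivatives of order `≤ k` on `D`, with the uniform topology. -/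
def ckTopologyE (k : ℕ) (E : Type) [NormedAddCommGroup E] [NormedSpace ℝ E] (D : Set E) :
    TopologicalSpace (RMetricE k E) :=
  ⨅ (i : ℕ) (_ : i ≤ k),
    TopologicalSpace.induced
      (fun g : RMetricE k E => UniformFun.ofFun (iteratedFDerivWithin ℝ i g.val D))
      (inferInstance :
        TopologicalSpace (UniformFun E (ContinuousMultilinearMap ℝ (fun _ : Fin i => E) (Bil E))))


namespace PerturbAux

variable {E : Type} [NormedAddCommGroup E] [NormedSpace ℝ E]

/-- Turn a continuous bilinear map into an element of `Bil E`. -/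
def bilOfCLM (L : E →L[ℝ] E →L[ℝ] ℝ) : Bil E :=
  @ContinuousLinearMap.uncurryLeft ℝ 1 (fun _ => E) ℝ _ _ _ _ _
    (((continuousMultilinearCurryFin1 ℝ E ℝ).symm :
        (E →L[ℝ] ℝ) →L[ℝ] ContinuousMultilinearMap ℝ (fun _ : Fin 1 => E) ℝ).comp L)

@[simp] theorem bilOfCLM_apply (L : E →L[ℝ] E →L[ℝ] ℝ) (m : Fin 2 → E) :
    bilOfCLM L m = L (m 0) (m 1) := rfl

theorem bil_smul_sq (A : Bil E) (a : ℝ) (u : E) :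
    A ![a • u, a • u] = (a * a) * A ![u, u] := by
  have h : ![a • u, a • u] = fun i => (fun _ : Fin 2 => a) i • (![u, u] i) := by
    funext i; fin_cases i <;> simp
  rw [h, A.map_smul_univ]
  simp [Fin.prod_univ_two, smul_eq_mul]
  exact Or.inl (pow_two a)

theorem bil_abs_le (A : Bil E) (u : E) (hu : ‖u‖ = 1) : |A ![u, u]| ≤ ‖A‖ := by
  have h := A.le_opNorm ![u, u]
  rw [Real.norm_eq_abs] at h
  refine h.trans ?_
  have : ∏ i, ‖(![u, u] : Fin 2 → E) i‖ = 1 := by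
    rw [Fin.prod_univ_two]; simp [hu]
  rw [this, mul_one]

variable {m : ℕ}

/-- coordinate functional `(t,x) ↦ x j`. -/
def coordC (j : Fin m) : (ℝ × EuclideanSpace ℝ (Fin m)) →L[ℝ] ℝ :=
  (EuclideanSpace.proj j).comp (ContinuousLinearMap.snd ℝ ℝ (EuclideanSpace ℝ (Fin m)))

def tC : (ℝ × EuclideanSpace ℝ (Fin m)) →L[ℝ] ℝ :=
  ContinuousLinearMap.fst ℝ ℝ (EuclideanSpace ℝ (Fin m))

/-- The perturbation bilinear form `dt ⊙ dx_j`. -/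
def pertB (j : Fin m) : Bil (ℝ × EuclideanSpace ℝ (Fin m)) :=
  bilOfCLM ((tC).smulRight (coordC j) + (coordC j).smulRight tC)

theorem pertB_apply (j : Fin m) (v w : ℝ × EuclideanSpace ℝ (Fin m)) :
    pertB j ![v, w] = v.1 * (w.2 j) + (v.2 j) * w.1 := by
  simp [pertB, bilOfCLM_apply, coordC, tC, ContinuousLinearMap.smulRight_apply]

theorem pertB_symm (j : Fin m) (v w : ℝ × EuclideanSpace ℝ (Fin m)) :
    pertB j ![v, w] = pertB j ![w, v] := by
  rw [pertB_apply, pertB_apply]; ring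

/-- On a closed ball, a metric is uniformly positive on unit vectors. -/
theorem exists_metric_lower_bound {k : ℕ} (g : RMetricE k (ℝ × EuclideanSpace ℝ (Fin m)))
    (R : ℝ) (hR : 0 < R) :
    ∃ c > 0, ∀ x ∈ closedBall (0 : ℝ × EuclideanSpace ℝ (Fin m)) R,
      ∀ v : ℝ × EuclideanSpace ℝ (Fin m), ‖v‖ = 1 → c ≤ g.val x ![v, v] := by
  set E' := ℝ × EuclideanSpace ℝ (Fin m)
  have hpi : Continuous fun p : E' × E' => (![p.2, p.2] : Fin 2 → E') := by
    have h : (fun p : E' × E' => (![p.2, p.2] : Fin 2 → E')) =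
        fun p => fun _ : Fin 2 => p.2 := by
      funext p i; fin_cases i <;> rfl
    rw [h]; exact continuous_pi fun _ => continuous_snd
  have hcont : Continuous fun p : E' × E' => g.val p.1 ![p.2, p.2] := by
    have h1 : Continuous fun p : E' × E' => (g.val p.1, (![p.2, p.2] : Fin 2 → E')) :=
      ((g.smooth.continuous).comp continuous_fst).prodMk hpi
    exact (ContinuousEval.continuous_eval).comp h1
  have hK : IsCompact ((closedBall (0 : E') R) ×ˢ (sphere (0 : E') 1)) :=
    (isCompact_closedBall _ _).prod (isCompact_sphere _ _)
  have hne : ((closedBall (0 : E') R) ×ˢ (sphere (0 : E') 1)).Nonempty := by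
    refine ⟨(0, ((1 : ℝ), (0 : EuclideanSpace ℝ (Fin m)))), ?_, ?_⟩
    · simpa using hR.le
    · rw [mem_sphere_iff_norm, sub_zero, Prod.norm_def]
      simp
  obtain ⟨⟨x₀, v₀⟩, hx₀, hmin⟩ := hK.exists_isMinOn hne hcont.continuousOn
  have hv₀ : ‖v₀‖ = 1 := by
    have := (mem_prod.1 hx₀).2; simpa [mem_sphere_iff_norm] using this
  have hv₀ne : v₀ ≠ 0 := by
    intro h; rw [h] at hv₀; simp at hv₀
  refine ⟨g.val x₀ ![v₀, v₀], g.posdef _ _ hv₀ne, fun x hx v hv => ?_⟩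
  exact hmin (Set.mk_mem_prod hx (by simpa [mem_sphere_iff_norm] using hv))

end PerturbAux

set_option maxHeartbeats 2000000

/-- Lemma `lem:perturb-closed`.
On the block `[-2η, 2η] × D^{n-1}_{2η} ⊆ ℝ × ℝ^{n-1}` consider a Riemannian metric of the
split form `dt² + Σ g_{ij}(t,x) dx_i dx_j`, so that `γ(t) = (t,0)` is a unit speed
geodesic orthogonal at `p = 0` to the hypersurface `Σ = {0} × D^{n-1}_{2η}`.  Then any
`C^r`-neighborhood (`r ≥ 2`) of the metric contains a metric `ḡ` for which `γ` is still a
unit speed geodesic but which is not orthogonal to `Σ` at `p`. -/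
theorem perturb_orthogonal_geodesic_at_hypersurface
    (n : ℕ) (hn : 2 ≤ n) (η : ℝ) (hη : 0 < η) (r : ℕ) (hr : 2 ≤ r)
    (g : RMetricE r (ℝ × EuclideanSpace ℝ (Fin (n - 1))))
    (hsplit : ∀ p ∈ (Icc (-(2*η)) (2*η)) ×ˢ
        (closedBall (0 : EuclideanSpace ℝ (Fin (n - 1))) (2*η)),
      g.val p ![((1:ℝ), (0 : EuclideanSpace ℝ (Fin (n - 1)))),
                ((1:ℝ), (0 : EuclideanSpace ℝ (Fin (n - 1))))] = 1 ∧
      ∀ x : EuclideanSpace ℝ (Fin (n - 1)),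
        g.val p ![((1:ℝ), (0 : EuclideanSpace ℝ (Fin (n - 1)))), ((0:ℝ), x)] = 0)
    (hgeo : IsGeodesicEOn g
      (fun t : ℝ => ((t, 0) : ℝ × EuclideanSpace ℝ (Fin (n - 1))))
      (Icc (-(2*η)) (2*η))) :
    ∀ U ∈ @nhds (RMetricE r (ℝ × EuclideanSpace ℝ (Fin (n - 1))))
        (ckTopologyE r (ℝ × EuclideanSpace ℝ (Fin (n - 1)))
          ((Icc (-(2*η)) (2*η)) ×ˢ (closedBall (0 : EuclideanSpace ℝ (Fin (n - 1))) (2*η))))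
        g,
      ∃ gbar ∈ U,
        IsGeodesicEOn gbar
          (fun t : ℝ => ((t, 0) : ℝ × EuclideanSpace ℝ (Fin (n - 1))))
          (Icc (-(2*η)) (2*η)) ∧
        (∀ t ∈ Icc (-(2*η)) (2*η),
          gbar.val ((t, 0) : ℝ × EuclideanSpace ℝ (Fin (n - 1)))
            ![derivWithin (fun u : ℝ => ((u, 0) : ℝ × EuclideanSpace ℝ (Fin (n - 1))))
                (Icc (-(2*η)) (2*η)) t,
              derivWithin (fun u : ℝ => ((u, 0) : ℝ × EuclideanSpace ℝ (Fin (n - 1))))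
                (Icc (-(2*η)) (2*η)) t] = 1) ∧
        ∃ x : EuclideanSpace ℝ (Fin (n - 1)),
          gbar.val ((0, 0) : ℝ × EuclideanSpace ℝ (Fin (n - 1)))
            ![((1:ℝ), (0 : EuclideanSpace ℝ (Fin (n - 1)))), ((0:ℝ), x)] ≠ 0 := by
  classical
  intro U hU
  have hm1 : 0 < n - 1 := by omega
  set j : Fin (n - 1) := ⟨0, hm1⟩ with hj
  set s : Set ℝ := Icc (-(2*η)) (2*η) with hs
  set D : Set (ℝ × EuclideanSpace ℝ (Fin (n - 1))) :=
    s ×ˢ closedBall (0 : EuclideanSpace ℝ (Fin (n - 1))) (2*η) with hD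
  set γ : ℝ → ℝ × EuclideanSpace ℝ (Fin (n - 1)) :=
    fun t => (t, (0 : EuclideanSpace ℝ (Fin (n - 1)))) with hγdef
  have h2η : (0:ℝ) < 2*η := by linarith
  have hsu : UniqueDiffOn ℝ s := uniqueDiffOn_Icc (by linarith)
  have hDu : UniqueDiffOn ℝ D := by
    refine UniqueDiffOn.prod hsu (uniqueDiffOn_convex (convex_closedBall _ _) ?_)
    rw [interior_closedBall _ (ne_of_gt h2η)]
    exact ⟨0, by simpa using h2η⟩
  have hDcl : IsClosed D := isClosed_Icc.prod Metric.isClosed_closedBall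
  have hDcp : IsCompact D := isCompact_Icc.prod (isCompact_closedBall _ _)
  -- the straight line and its derivative
  have hder : ∀ t : ℝ, HasDerivAt γ ((1:ℝ), (0 : EuclideanSpace ℝ (Fin (n - 1)))) t :=
    fun t => (hasDerivAt_id t).prodMk (hasDerivAt_const t _)
  have hγ' : ∀ t ∈ s, derivWithin γ s t = ((1:ℝ), (0 : EuclideanSpace ℝ (Fin (n - 1)))) :=
    fun t ht => ((hder t).hasDerivWithinAt).derivWithin (hsu t ht)
  have hγnorm : ∀ u ∈ s, ‖γ u‖ ≤ 2*η := by
    intro u hu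
    rw [hγdef]
    simp only [Prod.norm_def, norm_zero, Real.norm_eq_abs]
    rw [max_le_iff]
    constructor
    · rw [abs_le]; exact ⟨(mem_Icc.1 hu).1, (mem_Icc.1 hu).2⟩
    · linarith
  -- the bump function
  set χ : ContDiffBump (0 : ℝ × EuclideanSpace ℝ (Fin (n - 1))) :=
    ⟨2*η+1, 2*η+2, by linarith, by linarith⟩ with hχdef
  have hχ1 : ∀ x : ℝ × EuclideanSpace ℝ (Fin (n - 1)), ‖x‖ ≤ 2*η+1 → χ x = 1 := by
    intro x hx
    exact χ.one_of_mem_closedBall (mem_closedBall_zero_iff.2 hx)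
  have hb0 : PerturbAux.pertB j ![((1:ℝ), (0 : EuclideanSpace ℝ (Fin (n - 1)))),
      ((1:ℝ), (0 : EuclideanSpace ℝ (Fin (n - 1))))] = 0 := by
    rw [PerturbAux.pertB_apply]; simp
  -- uniform positivity constant
  obtain ⟨c, hc, hcb⟩ := PerturbAux.exists_metric_lower_bound g (2*η+2) (by linarith)
  set nb : ℝ := ‖PerturbAux.pertB j‖ with hnb
  have hnb0 : 0 ≤ nb := norm_nonneg _
  set δ₀ : ℝ := c / (2*(nb+1)) with hδ₀
  have hδ₀pos : 0 < δ₀ := by positivity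
  have hδ₀b : δ₀ * nb ≤ c / 2 := by
    rw [hδ₀, div_mul_eq_mul_div, div_le_div_iff₀ (by linarith) (by norm_num)]
    nlinarith
  -- the evaluation of the perturbed metric
  have hval : ∀ (δ : ℝ) (x : ℝ × EuclideanSpace ℝ (Fin (n - 1))) (v w),
      (g.val x + δ • (χ x • PerturbAux.pertB j)) ![v, w]
        = g.val x ![v, w] + δ * (χ x * PerturbAux.pertB j ![v, w]) := by
    intro δ x v w
    simp [ContinuousMultilinearMap.add_apply, ContinuousMultilinearMap.smul_apply,
      smul_eq_mul, mul_assoc]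
  -- positive definiteness of the perturbed metric
  have hposdef : ∀ δ : ℝ, |δ| ≤ δ₀ → ∀ (x : ℝ × EuclideanSpace ℝ (Fin (n - 1)))
      (v : ℝ × EuclideanSpace ℝ (Fin (n - 1))), v ≠ 0 →
      0 < (g.val x + δ • (χ x • PerturbAux.pertB j)) ![v, v] := by
    intro δ hδ x v hv
    rw [hval]
    rcases eq_or_ne (χ x) 0 with h0 | h0
    · rw [h0]; simpa using g.posdef x v hv
    · have hxball : x ∈ closedBall (0 : ℝ × EuclideanSpace ℝ (Fin (n - 1))) (2*η+2) := by
        have hxsupp : x ∈ Function.support χ := h0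
        rw [χ.support_eq] at hxsupp
        exact Metric.ball_subset_closedBall hxsupp
      have ha : 0 < ‖v‖ := norm_pos_iff.2 hv
      set a : ℝ := ‖v‖ with hadef
      obtain ⟨u, hu1, hvu⟩ : ∃ u, ‖u‖ = 1 ∧ v = a • u := by
        refine ⟨a⁻¹ • v, ?_, ?_⟩
        · rw [norm_smul, Real.norm_eq_abs, abs_of_pos (inv_pos.2 ha)]
          field_simp
          exact hadef.symm
        · rw [smul_smul, mul_inv_cancel₀ (ne_of_gt ha), one_smul]
      have hG : c ≤ g.val x ![u, u] := hcb x hxball u hu1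
      have hB : |PerturbAux.pertB j ![u, u]| ≤ nb := PerturbAux.bil_abs_le _ _ hu1
      have hχle : χ x ≤ 1 := χ.le_one
      have hχ0 : 0 ≤ χ x := χ.nonneg
      have habs : |δ * (χ x * PerturbAux.pertB j ![u, u])| ≤ c / 2 := by
        rw [abs_mul, abs_mul]
        calc |δ| * (|χ x| * |PerturbAux.pertB j ![u, u]|)
            ≤ δ₀ * (1 * nb) := by
              apply mul_le_mul hδ _ (by positivity) hδ₀pos.le
              exact mul_le_mul (by rwa [abs_of_nonneg hχ0]) hB (abs_nonneg _) zero_le_one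
          _ = δ₀ * nb := by ring
          _ ≤ c / 2 := hδ₀b
      have h2 : 0 < g.val x ![u, u] + δ * (χ x * PerturbAux.pertB j ![u, u]) := by
        have := abs_le.1 habs
        linarith
      have hpos := mul_pos (mul_pos ha ha) h2
      rw [hvu, PerturbAux.bil_smul_sq, PerturbAux.bil_smul_sq]
      nlinarith [hpos]
  -- smoothness
  have hsm : ∀ δ : ℝ, ContDiff ℝ r (fun x : ℝ × EuclideanSpace ℝ (Fin (n - 1)) =>
      g.val x + δ • (χ x • PerturbAux.pertB j)) := by
    intro δ
    exact g.smooth.add (((χ.contDiff).smul contDiff_const).const_smul δ)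
  -- symmetry
  have hsymm : ∀ δ : ℝ, ∀ (x : ℝ × EuclideanSpace ℝ (Fin (n - 1))) (v w),
      (g.val x + δ • (χ x • PerturbAux.pertB j)) ![v, w]
        = (g.val x + δ • (χ x • PerturbAux.pertB j)) ![w, v] := by
    intro δ x v w
    rw [hval, hval, g.symm x v w, PerturbAux.pertB_symm]
  -- unpack the neighborhood
  have hnhds : @nhds _ (ckTopologyE r (ℝ × EuclideanSpace ℝ (Fin (n - 1))) D) g =
      ⨅ i : {i : ℕ // i ≤ r}, Filter.comap
        (fun gg : RMetricE r (ℝ × EuclideanSpace ℝ (Fin (n - 1))) =>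
          UniformFun.ofFun (iteratedFDerivWithin ℝ i.1 gg.val D))
        (nhds (UniformFun.ofFun (iteratedFDerivWithin ℝ i.1 g.val D))) := by
    unfold ckTopologyE
    rw [iInf_subtype']
    rw [_root_.nhds_iInf]
    exact iInf_congr fun i => nhds_induced _ _
  rw [hnhds] at hU
  rw [Filter.mem_iInf'] at hU
  obtain ⟨I, hIfin, V, hV, -, hUeq, -⟩ := hU
  have hball : ∀ i : {i : ℕ // i ≤ r}, ∃ ε > 0,
      ∀ gg : RMetricE r (ℝ × EuclideanSpace ℝ (Fin (n - 1))),
      (∀ x, dist (iteratedFDerivWithin ℝ i.1 g.val D x)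
        (iteratedFDerivWithin ℝ i.1 gg.val D x) < ε) → gg ∈ V i := by
    intro i
    rcases Filter.mem_comap.1 (hV i) with ⟨W, hW, hWsub⟩
    rcases (UniformFun.hasBasis_nhds_of_basis _ _
        (UniformFun.ofFun (iteratedFDerivWithin ℝ i.1 g.val D))
        uniformity_basis_dist).mem_iff.1 hW with ⟨ε, hεpos, hεsub⟩
    refine ⟨ε, hεpos, fun gg hgg => hWsub ?_⟩
    exact hεsub fun x => hgg x
  choose ε hεpos hεV using hball
  -- bounds on the derivatives of the perturbation
  have hMex : ∀ i : ℕ, ∃ Mv, 0 ≤ Mv ∧ ∀ x ∈ D,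
      ‖iteratedFDerivWithin ℝ i
        (fun x : ℝ × EuclideanSpace ℝ (Fin (n - 1)) => χ x • PerturbAux.pertB j) D x‖ ≤ Mv := by
    intro i
    have hcd : ContDiffOn ℝ i
        (fun x : ℝ × EuclideanSpace ℝ (Fin (n - 1)) => χ x • PerturbAux.pertB j) D :=
      ((χ.contDiff).smul contDiff_const).contDiffOn
    have hco := hcd.continuousOn_iteratedFDerivWithin le_rfl hDu
    obtain ⟨Mv, hMv⟩ := hDcp.exists_bound_of_continuousOn hco
    exact ⟨max Mv 0, le_max_right _ _, fun x hx => (hMv x hx).trans (le_max_left _ _)⟩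
  choose M hM0 hMb using hMex
  -- choice of δ
  have hδex : ∃ δ : ℝ, 0 < δ ∧ δ ≤ δ₀ ∧ ∀ i ∈ I, δ * (M i.1 + nb) < ε i := by
    rcases I.eq_empty_or_nonempty with hI | hI
    · exact ⟨δ₀, hδ₀pos, le_refl _, fun i hi => absurd hi (by simp [hI])⟩
    · obtain ⟨i₀, hi₀I, hi₀min⟩ :=
        Set.exists_min_image I (fun i => ε i / (M i.1 + nb + 1)) hIfin hI
      refine ⟨min δ₀ (ε i₀ / (M i₀.1 + nb + 1)), lt_min hδ₀pos (div_pos (hεpos i₀) (by have := hM0 i₀.1; linarith)),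
        min_le_left _ _, fun i hi => ?_⟩
      have h1 : (0:ℝ) < M i.1 + nb + 1 := by have := hM0 i.1; linarith
      have hle : min δ₀ (ε i₀ / (M i₀.1 + nb + 1)) ≤ ε i / (M i.1 + nb + 1) :=
        (min_le_right _ _).trans (hi₀min i hi)
      calc min δ₀ (ε i₀ / (M i₀.1 + nb + 1)) * (M i.1 + nb)
          ≤ (ε i / (M i.1 + nb + 1)) * (M i.1 + nb) := by
            apply mul_le_mul_of_nonneg_right hle
            have := hM0 i.1; linarith
        _ < ε i := by
            rw [div_mul_eq_mul_div, div_lt_iff₀ h1]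
            nlinarith [hεpos i, hM0 i.1]
  obtain ⟨δ, hδpos, hδle, hδI⟩ := hδex
  have hδabs : |δ| ≤ δ₀ := by rwa [abs_of_pos hδpos]
  -- the perturbed metric
  refine ⟨⟨fun x => g.val x + δ • (χ x • PerturbAux.pertB j), hsymm δ, hposdef δ hδabs, hsm δ⟩,
    ?_, ?_, ?_, ?_⟩
  -- membership in U
  · rw [hUeq]
    simp only [Set.mem_iInter]
    intro i hi
    apply hεV i
    intro x
    rcases em (x ∈ D) with hx | hx
    · have hg' : ContDiffOn ℝ i.1 g.val D :=
        (g.smooth.of_le (by exact_mod_cast i.2)).contDiffOn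
      have hh' : ContDiffOn ℝ i.1
          (fun x : ℝ × EuclideanSpace ℝ (Fin (n - 1)) => δ • (χ x • PerturbAux.pertB j)) D :=
        (((χ.contDiff).smul contDiff_const).const_smul δ).contDiffOn
      have e1 : iteratedFDerivWithin ℝ i.1
          (fun x => g.val x + δ • (χ x • PerturbAux.pertB j)) D x
          = iteratedFDerivWithin ℝ i.1 g.val D x + iteratedFDerivWithin ℝ i.1
              (fun x : ℝ × EuclideanSpace ℝ (Fin (n - 1)) =>
                δ • (χ x • PerturbAux.pertB j)) D x :=
        iteratedFDerivWithin_add_apply' (hg' x hx) (hh' x hx) hDu hx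
      have e2 : iteratedFDerivWithin ℝ i.1
          (fun x : ℝ × EuclideanSpace ℝ (Fin (n - 1)) =>
            δ • (χ x • PerturbAux.pertB j)) D x
          = δ • iteratedFDerivWithin ℝ i.1
              (fun x : ℝ × EuclideanSpace ℝ (Fin (n - 1)) =>
                χ x • PerturbAux.pertB j) D x :=
        iteratedFDerivWithin_const_smul_apply (𝕜 := ℝ) (a := δ)
          (f := fun x : ℝ × EuclideanSpace ℝ (Fin (n - 1)) => χ x • PerturbAux.pertB j)
          (((χ.contDiff).smul contDiff_const).contDiffOn x hx) hDu hx
      rw [e1, e2, dist_self_add_right]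
      have hns := norm_smul δ (iteratedFDerivWithin ℝ i.1
        (fun x : ℝ × EuclideanSpace ℝ (Fin (n - 1)) => χ x • PerturbAux.pertB j) D x)
      rw [hns, Real.norm_eq_abs, abs_of_pos hδpos]
      calc δ * ‖iteratedFDerivWithin ℝ i.1
            (fun x : ℝ × EuclideanSpace ℝ (Fin (n - 1)) =>
              χ x • PerturbAux.pertB j) D x‖
          ≤ δ * (M i.1 + nb) := by
            apply mul_le_mul_of_nonneg_left _ hδpos.le
            have := hMb i.1 x hx
            linarith
        _ < ε i := hδI i hi
    · have hx' : x ∉ closure D := by rwa [hDcl.closure_eq]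
      obtain ⟨k, hk⟩ | h0 : (∃ k, i.1 = k + 1) ∨ i.1 = 0 := by
        rcases Nat.eq_zero_or_pos i.1 with h | h
        · exact Or.inr h
        · exact Or.inl ⟨i.1 - 1, by omega⟩
      · rw [hk]
        rw [iteratedFDerivWithin_succ_eq_comp_left, iteratedFDerivWithin_succ_eq_comp_left]
        simp only [Function.comp_apply]
        rw [fderivWithin_zero_of_notMem_closure hx', fderivWithin_zero_of_notMem_closure hx']
        simp only [dist_self]
        exact hεpos i
      · rw [h0]
        rw [iteratedFDerivWithin_zero_eq_comp, iteratedFDerivWithin_zero_eq_comp]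
        simp only [Function.comp_apply]
        rw [LinearIsometryEquiv.dist_map, dist_self_add_right]
        have hns1 := norm_smul δ (χ x • PerturbAux.pertB j)
        have hns2 := norm_smul (χ x) (PerturbAux.pertB j)
        rw [hns1, hns2, Real.norm_eq_abs, Real.norm_eq_abs, abs_of_pos hδpos,
          abs_of_nonneg χ.nonneg]
        calc δ * (χ x * nb) ≤ δ * (1 * nb) := by
              apply mul_le_mul_of_nonneg_left _ hδpos.le
              apply mul_le_mul_of_nonneg_right χ.le_one hnb0
          _ = δ * nb := by ring
          _ ≤ δ * (M 0 + nb) := by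
              apply mul_le_mul_of_nonneg_left _ hδpos.le
              have := hM0 0; linarith
          _ < ε i := by
              have := hδI i hi
              rw [h0] at this
              exact this
  -- geodesic property
  · constructor
    · exact (contDiff_id.prodMk contDiff_const).contDiffOn
    · intro t ht w
      have hχγ : ∀ u ∈ s, χ (γ u) = 1 := fun u hu => hχ1 _ ((hγnorm u hu).trans (by linarith))
      have hcongr : derivWithin (fun u =>
          (g.val (γ u) + δ • (χ (γ u) • PerturbAux.pertB j)) ![derivWithin γ s u, w]) s t
          = derivWithin (fun u => g.val (γ u) ![derivWithin γ s u, w]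
              + δ * PerturbAux.pertB j
                ![((1:ℝ), (0 : EuclideanSpace ℝ (Fin (n - 1)))), w]) s t := by
        apply derivWithin_congr
        · intro u hu
          simp [hχγ u hu, hγ' u hu, ContinuousMultilinearMap.add_apply,
            ContinuousMultilinearMap.smul_apply, smul_eq_mul]
        · simp [hχγ t ht, hγ' t ht, ContinuousMultilinearMap.add_apply,
            ContinuousMultilinearMap.smul_apply, smul_eq_mul]
      have hfd : fderiv ℝ (fun x => g.val x + δ • (χ x • PerturbAux.pertB j)) (γ t)
          = fderiv ℝ g.val (γ t) := by
        have hevmem : closedBall (0 : ℝ × EuclideanSpace ℝ (Fin (n - 1))) (2*η+1) ∈ nhds (γ t) := by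
          apply closedBall_mem_nhds_of_mem
          rw [mem_ball_zero_iff]
          exact lt_of_le_of_lt (hγnorm t ht) (by linarith)
        have hev : (fun x => g.val x + δ • (χ x • PerturbAux.pertB j))
            =ᶠ[nhds (γ t)] (fun x => g.val x + δ • PerturbAux.pertB j) := by
          filter_upwards [hevmem] with x hx
          rw [hχ1 x (mem_closedBall_zero_iff.1 hx), one_smul]
        rw [hev.fderiv_eq, fderiv_add_const]
      show derivWithin (fun u =>
          (g.val (γ u) + δ • (χ (γ u) • PerturbAux.pertB j)) ![derivWithin γ s u, w]) s t
        = (1/2) * (fderiv ℝ (fun x => g.val x + δ • (χ x • PerturbAux.pertB j)) (γ t) w)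
            ![derivWithin γ s t, derivWithin γ s t]
      rw [hcongr, derivWithin_add_const _, hfd]
      exact (hgeo.2 t ht w)
  -- unit speed
  · intro t ht
    have htD : γ t ∈ D := ⟨ht, mem_closedBall_self (by linarith)⟩
    show (g.val (γ t) + δ • (χ (γ t) • PerturbAux.pertB j))
        ![derivWithin γ s t, derivWithin γ s t] = 1
    rw [hγ' t ht, hval, hb0, (hsplit (γ t) htD).1]
    ring
  -- non-orthogonality
  · refine ⟨EuclideanSpace.single j 1, ?_⟩
    have h0D : ((0:ℝ), (0 : EuclideanSpace ℝ (Fin (n - 1)))) ∈ D :=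
      ⟨⟨by exact (show -(2*η) ≤ (0:ℝ) by linarith), by exact (show (0:ℝ) ≤ 2*η by linarith)⟩,
        mem_closedBall_self (by linarith)⟩
    show (g.val (0, 0) + δ • (χ ((0:ℝ), (0 : EuclideanSpace ℝ (Fin (n - 1)))) •
        PerturbAux.pertB j))
        ![((1:ℝ), (0 : EuclideanSpace ℝ (Fin (n - 1)))),
          ((0:ℝ), EuclideanSpace.single j 1)] ≠ 0
    rw [hval, (hsplit _ h0D).2 (EuclideanSpace.single j 1)]
    have hχ0 : χ ((0:ℝ), (0 : EuclideanSpace ℝ (Fin (n - 1)))) = 1 := by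
      apply hχ1
      simp only [Prod.norm_def, norm_zero, Real.norm_eq_abs]
      simp
      linarith
    rw [hχ0, PerturbAux.pertB_apply]
    simp only [EuclideanSpace.single_apply]
    simp
    positivity


end
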